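/- Let q > 3 be a prime, p a prime with q | p - 1, and G = (C_p × C_p) ⋊ C_q where a generator of C_q acts as a diagonal matrix diag(λ, μ) with λ, μ of order q, λ ≠ μ, and λμ ≠ 1. Then Aut(G) ≅ Hol(C_p) × Hol(C_p). -/

import Mathlib

/-!
Write `N = 𝔽_p²`, `t` for the generator of `C_q` and `D = diag(λ, μ)` for its action. The product
`Hol(C_p) × Hol(C_p)` is `N ⋊ (𝔽_p^× × 𝔽_p^×)`, and `(n, u)` acts on `G = N ⋊ C_q` as the
diagonal automorphism `u` followed by conjugation by `n`; this action is faithful because `D` fixes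
no nonzero vector. Conversely, an automorphism `α` of `G` preserves `N` (its exponent `p` is
coprime to `q`) and acts on it by a linear `f` with `f D = D^k f`, where `α t ∈ N t^k`. So `f`
maps eigenvectors to eigenvectors and `{λ, μ} = {λ^k, μ^k}`. A swap `λ^k = μ`, `μ^k = λ` forces
`k² = 1`, i.e. `k = -1` and `λμ = 1`; hence `k = 1` and `f` is diagonal. Finally `1 - D` is
invertible, so the `N`-component of `α t` is produced by conjugating with a suitable `n`.
-/

open Multiplicative SemidirectProduct

theorem MonoidHom.eq_one_of_pow_eq_one_of_coprime {A B : Type*} [Monoid A] [Group B] [Finite B]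
    {n : ℕ} (hA : ∀ a : A, a ^ n = 1) (hn : n.Coprime (Nat.card B)) (f : A →* B) : f = 1 := by
  ext a
  have h : orderOf (f a) ∣ n.gcd (Nat.card B) :=
    Nat.dvd_gcd (orderOf_dvd_of_pow_eq_one (by rw [← map_pow, hA, map_one]))
      (orderOf_dvd_natCard _)
  rw [hn, Nat.dvd_one, orderOf_eq_one_iff] at h
  exact h

theorem MulAut.conj_map {G : Type*} [Group G] (α : MulAut G) (x : G) :
    MulAut.conj (α x) = α * MulAut.conj x * α⁻¹ := by
  ext y
  simp

theorem Multiplicative.ofAdd_one_pow_val {n : ℕ} [NeZero n] (x : Multiplicative (ZMod n)) :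
    ofAdd (1 : ZMod n) ^ (toAdd x).val = x := by
  rw [← ofAdd_nsmul, nsmul_one, ZMod.natCast_zmod_val, ofAdd_toAdd]

theorem MonoidHom.ext_mzmod {n : ℕ} [NeZero n] {M : Type*} [Monoid M]
    ⦃f g : Multiplicative (ZMod n) →* M⦄ (h : f (ofAdd 1) = g (ofAdd 1)) : f = g := by
  refine MonoidHom.ext fun x => ?_
  rw [← ofAdd_one_pow_val x, map_pow, map_pow, h]

theorem Multiplicative.pow_char_eq_one {p : ℕ} {M : Type*} [AddCommGroup M] [Module (ZMod p) M]
    (v : Multiplicative M) : v ^ p = 1 := by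
  rw [← ofAdd_toAdd v, ← ofAdd_nsmul, ← Nat.cast_smul_eq_nsmul (ZMod p), ZMod.natCast_self,
    zero_smul, ofAdd_zero]

section orderOf

variable {M : Type*} [LeftCancelMonoid M] {q : ℕ}

theorem pow_eq_pow_iff_natCast_eq {x : M} (hx : orderOf x = q) {a b : ℕ} :
    x ^ a = x ^ b ↔ (a : ZMod q) = b := by
  rw [pow_eq_pow_iff_modEq, hx, ZMod.natCast_eq_natCast_iff]

theorem pow_val_eq_self_iff [NeZero q] {x : M} (hx : orderOf x = q) (k : ZMod q) :
    x ^ k.val = x ↔ k = 1 := by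
  nth_rw 2 [← pow_one x]
  rw [pow_eq_pow_iff_natCast_eq hx, ZMod.natCast_zmod_val, Nat.cast_one]

theorem mul_eq_one_of_pow_swap [Fact q.Prime] {l m : M} (hl : orderOf l = q) (hne : l ≠ m) {j : ℕ}
    (hlm : l ^ j = m) (hml : m ^ j = l) : l * m = 1 := by
  have hjj : (j : ZMod q) * j = 1 := by
    have : l ^ (j * j) = l ^ 1 := by rw [pow_mul, hlm, hml, pow_one]
    exact_mod_cast (pow_eq_pow_iff_natCast_eq hl).mp this
  rcases mul_self_eq_one_iff.mp hjj with hj | hj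
  · refine absurd ?_ hne
    nth_rw 1 [← hlm, ← pow_one l]
    rw [pow_eq_pow_iff_natCast_eq hl, hj, Nat.cast_one]
  · rw [← hlm, ← pow_succ', ← pow_zero l, pow_eq_pow_iff_natCast_eq hl]
    push_cast
    rw [hj, neg_add_cancel]

end orderOf

namespace SemidirectProduct

section

variable {N G A : Type*} [Group N] [Group G] [Group A] {φ : G →* MulAut N}

def mulAutOfCommute (ρ : A →* MulAut N) (hρ : ∀ a g, Commute (ρ a) (φ g)) :
    A →* MulAut (N ⋊[φ] G) where
  toFun a := congr (ρ a) (MulEquiv.refl G) fun g => (hρ a g).eq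
  map_one' :=
    MulEquiv.ext fun x => SemidirectProduct.ext (DFunLike.congr_fun (map_one ρ) x.left) rfl
  map_mul' a b :=
    MulEquiv.ext fun x => SemidirectProduct.ext (DFunLike.congr_fun (map_mul ρ a b) x.left) rfl

@[simp]
theorem mulAutOfCommute_apply (ρ : A →* MulAut N) (hρ : ∀ a g, Commute (ρ a) (φ g)) (a : A)
    (x : N ⋊[φ] G) : mulAutOfCommute ρ hρ a x = ⟨ρ a x.left, x.right⟩ :=
  rfl

/-- `(n, a)` acts as `x ↦ n (a • x) n⁻¹`, the analogue of an affine map `v ↦ n + a v`. -/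
def affineMulAut (ρ : A →* MulAut N) (hρ : ∀ a g, Commute (ρ a) (φ g)) :
    N ⋊[ρ] A →* MulAut (N ⋊[φ] G) :=
  lift (MulAut.conj.comp inl) (mulAutOfCommute ρ hρ) fun a => by
    ext n : 1
    have : inl (ρ a n) = mulAutOfCommute ρ hρ a (inl n) := by ext <;> simp
    simp only [MonoidHom.comp_apply, MulEquiv.coe_toMonoidHom, this, MulAut.conj_map]
    rfl

theorem affineMulAut_apply (ρ : A →* MulAut N) (hρ : ∀ a g, Commute (ρ a) (φ g))
    (x : N ⋊[ρ] A) (y : N ⋊[φ] G) :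
    affineMulAut ρ hρ x y = inl x.left * ⟨ρ x.right y.left, y.right⟩ * (inl x.left)⁻¹ :=
  rfl

theorem affineMulAut_apply_inr (ρ : A →* MulAut N) (hρ : ∀ a g, Commute (ρ a) (φ g))
    (x : N ⋊[ρ] A) (g : G) :
    affineMulAut ρ hρ x (inr g) = inl (x.left * (φ g x.left)⁻¹) * inr g := by
  ext <;> simp [affineMulAut_apply]

theorem exists_eq_inl_comp [Finite G] {M : Type*} [Monoid M] {e : ℕ} (hM : ∀ x : M, x ^ e = 1)
    (he : e.Coprime (Nat.card G)) (F : M →* N ⋊[φ] G) : ∃ f : M →* N, F = inl.comp f := by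
  have hF (x : M) : (F x).right = 1 :=
    DFunLike.congr_fun (MonoidHom.eq_one_of_pow_eq_one_of_coprime hM he (rightHom.comp F)) x
  exact ⟨{ toFun x := (F x).left
           map_one' := by simp
           map_mul' x y := by simp [mul_left, hF] },
    by ext x <;> simp [hF]⟩

end

section

variable {N G A : Type*} [CommGroup N] [Group G] [Group A] {φ : G →* MulAut N}

theorem mul_inl_mul_inv (x : N ⋊[φ] G) (n : N) : x * inl n * x⁻¹ = inl (φ x.right n) := by
  ext <;> simp [mul_comm]

theorem affineMulAut_apply_inl (ρ : A →* MulAut N) (hρ : ∀ a g, Commute (ρ a) (φ g))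
    (x : N ⋊[ρ] A) (n : N) : affineMulAut ρ hρ x (inl n) = inl (ρ x.right n) := by
  ext <;> simp [affineMulAut_apply, mul_comm]

theorem affineMulAut_injective {ρ : A →* MulAut N} (hρ : ∀ a g, Commute (ρ a) (φ g))
    (hρ_inj : Function.Injective ρ) (g : G) (hg : ∀ n, φ g n = n → n = 1) :
    Function.Injective (affineMulAut ρ hρ) := by
  refine (injective_iff_map_eq_one _).mpr fun x hx => ?_
  have hright : x.right = 1 := hρ_inj <| MulEquiv.ext fun n => inl_injective (φ := φ) <| by
    simpa [affineMulAut_apply_inl] using DFunLike.congr_fun hx (inl n)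
  have hleft : x.left = 1 := hg _ <| by
    have := DFunLike.congr_fun hx (inr g)
    rw [affineMulAut_apply_inr, MulAut.one_apply, mul_eq_right, map_eq_one_iff _ inl_injective,
      mul_inv_eq_one] at this
    exact this.symm
  exact SemidirectProduct.ext hleft hright

theorem map_action_of_comp_inl_eq (α : N ⋊[φ] G →* N ⋊[φ] G) (f : N →* N)
    (hf : α.comp inl = inl.comp f) (g : G) (n : N) :
    f (φ g n) = φ (α (inr g)).right (f n) := by
  have hα (n : N) : α (inl n) = inl (f n) := DFunLike.congr_fun hf n
  apply inl_injective (φ := φ)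
  rw [← hα, inl_aut, map_inv inr, map_mul, map_mul, map_inv, hα]
  exact mul_inl_mul_inv _ _

end

end SemidirectProduct

section intertwining

variable {K : Type*} [Field K] {l m : K} {f : K × K →ₗ[K] K × K}

theorem eigenvalues_eq_or_swap_of_intertwines {l' m' : K} (hlm : l ≠ m)
    (hf : Function.Injective f)
    (hcomm : ∀ v : K × K, f (l * v.1, m * v.2) = (l' * (f v).1, m' * (f v).2)) :
    l' = l ∧ m' = m ∨ l' = m ∧ m' = l := by
  have eigen : ∀ (c : K) (e : K × K), e ≠ 0 → (l * e.1, m * e.2) = c • e → c = l' ∨ c = m' := by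
    intro c e he hce
    have h : (c * (f e).1, c * (f e).2) = (l' * (f e).1, m' * (f e).2) := by
      rw [← hcomm, hce, map_smul]; rfl
    by_contra! hc
    refine (map_ne_zero_iff f hf).mpr he (Prod.ext ?_ ?_)
    · exact (mul_eq_mul_right_iff.mp (congrArg Prod.fst h)).resolve_left hc.1
    · exact (mul_eq_mul_right_iff.mp (congrArg Prod.snd h)).resolve_left hc.2
  have hl := eigen l (1, 0) (by simp) (by simp)
  have hm := eigen m (0, 1) (by simp) (by simp)
  grind

theorem exists_units_eq_diag_of_commute (hlm : l ≠ m) (hf : Function.Injective f)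
    (hcomm : ∀ v : K × K, f (l * v.1, m * v.2) = (l * (f v).1, m * (f v).2)) :
    ∃ u : Kˣ × Kˣ, ∀ v, f v = (u.1 * v.1, u.2 * v.2) := by
  have hl : f (l, 0) = l • f (1, 0) := by rw [← map_smul]; simp
  have hm : f (0, m) = m • f (0, 1) := by rw [← map_smul]; simp
  have h₁ := hcomm (1, 0)
  have h₂ := hcomm (0, 1)
  simp only [mul_one, mul_zero, hl, hm, Prod.ext_iff, Prod.smul_fst, Prod.smul_snd, smul_eq_mul]
    at h₁ h₂
  have hc : (f (1, 0)).2 = 0 := (mul_eq_mul_right_iff.mp h₁.2).resolve_left hlm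
  have hb : (f (0, 1)).1 = 0 := (mul_eq_mul_right_iff.mp h₂.1).resolve_left hlm.symm
  have ha : (f (1, 0)).1 ≠ 0 := fun ha =>
    (map_ne_zero_iff f hf).mpr (by simp) (Prod.ext ha hc)
  have hd : (f (0, 1)).2 ≠ 0 := fun hd =>
    (map_ne_zero_iff f hf).mpr (by simp) (Prod.ext hb hd)
  refine ⟨(Units.mk0 _ ha, Units.mk0 _ hd), fun v => ?_⟩
  have hv : v = v.1 • (1, 0) + v.2 • (0, 1) := by ext <;> simp
  rw [hv, map_add, map_smul, map_smul]
  ext <;> simp [hb, hc, mul_comm]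

end intertwining

section diagonal

variable {K : Type*}

def diagMulAut [Semiring K] : Kˣ × Kˣ →* MulAut (Multiplicative (K × K)) where
  toFun u :=
    { toFun v := ofAdd (u.1 * (toAdd v).1, u.2 * (toAdd v).2)
      invFun v := ofAdd (↑u.1⁻¹ * (toAdd v).1, ↑u.2⁻¹ * (toAdd v).2)
      left_inv v := by simp
      right_inv v := by simp
      map_mul' v w := by simp [mul_add]; rfl }
  map_one' := by ext <;> simp
  map_mul' u u' := by ext <;> simp [mul_assoc]

theorem diagMulAut_apply [Semiring K] (u : Kˣ × Kˣ) (v : K × K) :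
    diagMulAut u (ofAdd v) = ofAdd (u.1 * v.1, u.2 * v.2) :=
  rfl

theorem diagMulAut_injective [Semiring K] : Function.Injective (diagMulAut (K := K)) :=
  fun u u' h => by
    have h₁ := congrArg toAdd (DFunLike.congr_fun h (ofAdd (1, 1)))
    simp only [diagMulAut_apply, mul_one, toAdd_ofAdd, Prod.ext_iff, Units.val_inj] at h₁
    exact Prod.ext h₁.1 h₁.2

variable [Field K] {l m : Kˣ}

theorem eq_one_of_diagMulAut_apply_eq (hl : l ≠ 1) (hm : m ≠ 1) {b : Multiplicative (K × K)}
    (hb : diagMulAut (l, m) b = b) : b = 1 := by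
  have h : (l * (toAdd b).1, m * (toAdd b).2) = toAdd b := congrArg toAdd hb
  simp only [Prod.ext_iff, mul_left_eq_self₀, Units.val_eq_one, hl, hm, false_or] at h
  rw [← ofAdd_toAdd b, (Prod.ext h.1 h.2 : toAdd b = 0), ofAdd_zero]

theorem exists_mul_inv_diagMulAut_eq (hl : l ≠ 1) (hm : m ≠ 1) (w : Multiplicative (K × K)) :
    ∃ b, b * (diagMulAut (l, m) b)⁻¹ = w := by
  have hl' : (1 : K) - l ≠ 0 := sub_ne_zero.mpr (Ne.symm (Units.val_eq_one.not.mpr hl))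
  have hm' : (1 : K) - m ≠ 0 := sub_ne_zero.mpr (Ne.symm (Units.val_eq_one.not.mpr hm))
  refine ⟨ofAdd (((1 : K) - l)⁻¹ * (toAdd w).1, ((1 : K) - m)⁻¹ * (toAdd w).2), ?_⟩
  apply toAdd.injective
  ext <;> simp [diagMulAut_apply] <;> field_simp <;> ring

end diagonal

def mulAutEquivUnits (n : ℕ) : MulAut (Multiplicative (ZMod n)) ≃* (ZMod n)ˣ :=
  (MulAutMultiplicative (ZMod n)).trans (ZMod.AddAutEquivUnits n).toMultiplicative

theorem toAdd_mulAut_apply {n : ℕ} (σ : MulAut (Multiplicative (ZMod n)))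
    (x : Multiplicative (ZMod n)) : toAdd (σ x) = mulAutEquivUnits n σ * toAdd x := by
  have h := ZMod.map_smul (AddMonoidHom.toMultiplicative.symm σ.toMonoidHom) (toAdd x) 1
  simp only [smul_eq_mul, mul_one] at h
  rw [mul_comm]
  exact h

abbrev Hol (p : ℕ) :=
  Multiplicative (ZMod p) ⋊[MonoidHom.id (MulAut (Multiplicative (ZMod p)))]
    MulAut (Multiplicative (ZMod p))

def holProdEquiv (p : ℕ) :
    Hol p × Hol p ≃* Multiplicative (ZMod p × ZMod p) ⋊[diagMulAut] ((ZMod p)ˣ × (ZMod p)ˣ) where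
  toFun h := ⟨ofAdd (toAdd h.1.left, toAdd h.2.left),
    (mulAutEquivUnits p h.1.right, mulAutEquivUnits p h.2.right)⟩
  invFun x := (⟨ofAdd (toAdd x.left).1, (mulAutEquivUnits p).symm x.right.1⟩,
    ⟨ofAdd (toAdd x.left).2, (mulAutEquivUnits p).symm x.right.2⟩)
  left_inv h := by ext <;> simp
  right_inv x := by ext <;> simp
  map_mul' h h' := by
    ext <;> simp [toAdd_mulAut_apply, diagMulAut_apply]

section

variable {p q : ℕ} {φ : Multiplicative (ZMod q) →* MulAut (Multiplicative (ZMod p × ZMod p))}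
  {l m : (ZMod p)ˣ}

theorem eq_diagMulAut_pow [NeZero q] (hφ : φ (ofAdd 1) = diagMulAut (l, m))
    (h : Multiplicative (ZMod q)) : φ h = diagMulAut ((l, m) ^ (toAdd h).val) := by
  conv_lhs => rw [← ofAdd_one_pow_val h]
  rw [map_pow, hφ, map_pow]

theorem commute_diagMulAut [NeZero q] (hφ : φ (ofAdd 1) = diagMulAut (l, m))
    (u : (ZMod p)ˣ × (ZMod p)ˣ) (h : Multiplicative (ZMod q)) : Commute (diagMulAut u) (φ h) := by
  rw [eq_diagMulAut_pow hφ]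
  exact (Commute.all u _).map diagMulAut

theorem coprime_of_orderOf_eq [Fact p.Prime] [Fact q.Prime] (hl : orderOf l = q) :
    p.Coprime q := by
  refine (Nat.coprime_primes Fact.out Fact.out).mpr fun hpq => ?_
  have h := ZMod.orderOf_units_dvd_card_sub_one l
  rw [hl, ← hpq] at h
  have hp := (Fact.out : p.Prime).one_lt
  have := Nat.le_of_dvd (Nat.sub_pos_of_lt hp) h
  omega

variable [Fact p.Prime] [Fact q.Prime]

theorem right_apply_inr_eq_and_exists_diagMulAut (hφ : φ (ofAdd 1) = diagMulAut (l, m))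
    (hl : orderOf l = q) (hne : l ≠ m) (hdet : l * m ≠ 1)
    (α : MulAut (Multiplicative (ZMod p × ZMod p) ⋊[φ] Multiplicative (ZMod q))) :
    (α (inr (ofAdd 1))).right = ofAdd 1 ∧ ∃ u, ∀ n, α (inl n) = inl (diagMulAut u n) := by
  obtain ⟨f, hf⟩ := exists_eq_inl_comp pow_char_eq_one
    (by simpa using coprime_of_orderOf_eq hl) (α.toMonoidHom.comp inl)
  have hf_inj : Function.Injective f := Function.Injective.of_comp (f := inl) <| by
    rw [← MonoidHom.coe_comp, ← hf]
    exact α.injective.comp inl_injective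
  let F := AddMonoidHom.toZModLinearMap p (AddMonoidHom.toMultiplicative.symm f)
  have hF_inj : Function.Injective F := fun v w h => hf_inj h
  set k := toAdd (α (inr (ofAdd 1))).right
  have hF (v) : F (l * v.1, m * v.2) =
      ((l ^ k.val : (ZMod p)ˣ) * (F v).1, (m ^ k.val : (ZMod p)ˣ) * (F v).2) := by
    have := map_action_of_comp_inl_eq α.toMonoidHom f hf (ofAdd 1) (ofAdd v)
    rw [hφ, eq_diagMulAut_pow hφ] at this
    exact congrArg toAdd this
  have hlm : (l : ZMod p) ≠ m := Units.val_injective.ne hne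
  have hk : k = 1 := by
    rcases eigenvalues_eq_or_swap_of_intertwines hlm hF_inj hF with ⟨h, -⟩ | ⟨h₁, h₂⟩
    · exact (pow_val_eq_self_iff hl k).mp (Units.val_injective h)
    · exact absurd (mul_eq_one_of_pow_swap hl hne (Units.val_injective h₁)
        (Units.val_injective h₂)) hdet
  rw [hk, ZMod.val_one, pow_one, pow_one] at hF
  obtain ⟨u, hu⟩ := exists_units_eq_diag_of_commute hlm hF_inj hF
  refine ⟨congrArg ofAdd hk, u, fun n => ?_⟩
  rw [← MulEquiv.coe_toMonoidHom, ← MonoidHom.comp_apply, hf]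
  exact congrArg (inl ∘ ofAdd) (hu (toAdd n))

theorem affineMulAut_diagMulAut_surjective (hφ : φ (ofAdd 1) = diagMulAut (l, m))
    (hl : orderOf l = q) (hl1 : l ≠ 1) (hm1 : m ≠ 1) (hne : l ≠ m) (hdet : l * m ≠ 1) :
    Function.Surjective (affineMulAut (φ := φ) diagMulAut (commute_diagMulAut hφ)) := by
  intro α
  obtain ⟨hr, u, hu⟩ := right_apply_inr_eq_and_exists_diagMulAut hφ hl hne hdet α
  obtain ⟨b, hb⟩ := exists_mul_inv_diagMulAut_eq hl1 hm1 (α (inr (ofAdd 1))).left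
  refine ⟨⟨b, u⟩, MulEquiv.toMonoidHom_injective (hom_ext ?_ (MonoidHom.ext_mzmod ?_))⟩
  · refine MonoidHom.ext fun n => ?_
    simp only [MonoidHom.comp_apply, MulEquiv.coe_toMonoidHom, affineMulAut_apply_inl, hu]
  · simp only [MonoidHom.comp_apply, MulEquiv.coe_toMonoidHom, affineMulAut_apply_inr, hφ, hb]
    conv_rhs => rw [← inl_left_mul_inr_right (α (inr (ofAdd 1))), hr]

end

theorem aut_type8_general
    {p q : ℕ} (hp : p.Prime) (hq : q.Prime)
    (φ : Multiplicative (ZMod q) →* MulAut (Multiplicative (ZMod p × ZMod p)))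
    (l m : (ZMod p)ˣ) (hlo : orderOf l = q) (hmo : orderOf m = q)
    (hne : l ≠ m) (hdet : l * m ≠ 1)
    (hact : ∀ v : ZMod p × ZMod p,
      φ (Multiplicative.ofAdd (1 : ZMod q)) (Multiplicative.ofAdd v) =
        Multiplicative.ofAdd ((l : ZMod p) * v.1, (m : ZMod p) * v.2)) :
    Nonempty (MulAut (Multiplicative (ZMod p × ZMod p) ⋊[φ] Multiplicative (ZMod q)) ≃*
      (Multiplicative (ZMod p) ⋊[MonoidHom.id (MulAut (Multiplicative (ZMod p)))]
          MulAut (Multiplicative (ZMod p))) ×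
        (Multiplicative (ZMod p) ⋊[MonoidHom.id (MulAut (Multiplicative (ZMod p)))]
          MulAut (Multiplicative (ZMod p)))) := by
  have := Fact.mk hp
  have := Fact.mk hq
  have hφ : φ (ofAdd 1) = diagMulAut (l, m) := MulEquiv.ext fun v => hact (toAdd v)
  have hl1 : l ≠ 1 := fun h => hq.one_lt.ne' (by rw [← hlo, h, orderOf_one])
  have hm1 : m ≠ 1 := fun h => hq.one_lt.ne' (by rw [← hmo, h, orderOf_one])
  have hinj := affineMulAut_injective (commute_diagMulAut hφ) diagMulAut_injective (ofAdd 1)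
    fun n hn => eq_one_of_diagMulAut_apply_eq hl1 hm1 (hφ ▸ hn)
  have hsurj := affineMulAut_diagMulAut_surjective hφ hlo hl1 hm1 hne hdet
  exact ⟨(MulEquiv.ofBijective _ ⟨hinj, hsurj⟩).symm.trans (holProdEquiv p).symm⟩

/-- Type 8: if `q > 3`, `q | p - 1`, and `G = (C_p × C_p) ⋊ C_q` where a
generator of `C_q` acts as `diag(λ, μ)` with `λ, μ` of order `q`, `λ ≠ μ`,
`λμ ≠ 1`, then `Aut(G) ≅ Hol(C_p) × Hol(C_p)`. -/
theorem aut_type8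
    {p q : ℕ} (hp : p.Prime) (hq : q.Prime) (hq3 : 3 < q) (hdvd : q ∣ p - 1)
    (φ : Multiplicative (ZMod q) →* MulAut (Multiplicative (ZMod p × ZMod p)))
    (l m : (ZMod p)ˣ) (hlo : orderOf l = q) (hmo : orderOf m = q)
    (hne : l ≠ m) (hdet : l * m ≠ 1)
    (hact : ∀ v : ZMod p × ZMod p,
      φ (Multiplicative.ofAdd (1 : ZMod q)) (Multiplicative.ofAdd v) =
        Multiplicative.ofAdd ((l : ZMod p) * v.1, (m : ZMod p) * v.2)) :
    Nonempty (MulAut (Multiplicative (ZMod p × ZMod p) ⋊[φ] Multiplicative (ZMod q)) ≃*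
      (Multiplicative (ZMod p) ⋊[MonoidHom.id (MulAut (Multiplicative (ZMod p)))]
          MulAut (Multiplicative (ZMod p))) ×
        (Multiplicative (ZMod p) ⋊[MonoidHom.id (MulAut (Multiplicative (ZMod p)))]
          MulAut (Multiplicative (ZMod p)))) :=
  aut_type8_general hp hq φ l m hlo hmo hne hdet hact
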